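/- arXiv:2408.17349 — 4 statements merged into one kernel-verified Lean document; each statement's English description precedes it below -/
import Mathlib

section
/- Let X_1,…,X_n be bit-valued random variables (not assumed independent). Suppose each position i ∈ {1,…,n} is independently assigned to a 'test set' J_t with probability p_t and to a 'key set' J_k with probability p_k (and to neither with probability 1−p_t−p_k), independently of the X_i. Let Ω(n_X,n_K) be the event that exactly n_X positions land in the test set and exactly n_K positions land in the key set. Then, conditioned on Ω(n_X,n_K), Pr( (1/n_K)·Σ_{i∈J_k} X_i ≥ (1/n_X)·Σ_{i∈J_t} X_i + γ ) ≤ exp(−2γ² · n_K n_X² / ((n_K+n_X)(n_X+1))) for every γ > 0. -/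
/-!
Conditioned on the numbers of test and key positions, every assignment of positions with these
counts is equally likely (the coordinates of `A` are independent with common marginals), and the
assignment is independent of `X`. The conditional probability is therefore at most the largest,
over fixed bit strings `x`, fraction of such assignments that are bad for `x`. Grouping the
assignments by the set `U` of selected positions, the key set is a uniformly random
`n_K`-subset of `U`, and Serfling's bound follows by a Chernoff argument from the estimate
`avg_K exp (t ∑_{i ∈ K} x i) ≤ exp (t k x̄ + k (N - k + 1) / N * t² / 8)` for `k`-subsets of an
`N`-set. That estimate is proved by induction on `k`: a `(k + 1)`-subset arises `k + 1` times as
`insert i K` with `K` a `k`-subset of `U \ {i}`, the induction hypothesis on `U \ {i}` leaves a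
factor `exp (t (1 - k / (N - 1)) x i)`, and Hoeffding's lemma for the empirical distribution of `x`
on `U` absorbs it.
-/

open MeasureTheory ProbabilityTheory Finset Real
open scoped ENNReal NNReal

theorem sum_exp_le_card_mul_exp_mean {ι : Type*} {U : Finset ι} (hU : U.Nonempty) {x : ι → ℝ}
    (hx : ∀ i ∈ U, x i ∈ Set.Icc 0 1) (t : ℝ) :
    ∑ i ∈ U, exp (t * x i) ≤ #U * exp (t * ((∑ i ∈ U, x i) / #U) + t ^ 2 / 8) := by
  set ν : Measure ℝ := (#U : ℝ≥0∞)⁻¹ • ∑ i ∈ U, Measure.dirac (x i)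
  have hN : (#U : ℝ≥0∞) ≠ 0 := by simpa using hU.ne_empty
  have : IsProbabilityMeasure ν :=
    ⟨by simp [ν, ENNReal.inv_mul_cancel hN (ENNReal.natCast_ne_top _)]⟩
  have hint (f : ℝ → ℝ) : ∫ y, f y ∂ν = (∑ i ∈ U, f (x i)) / #U := by
    rw [integral_smul_measure, integral_finsetSum_measure fun i _ => integrable_dirac (by simp)]
    simp [div_eq_inv_mul]
  have hb : ∀ᵐ y ∂ν, y ∈ Set.Icc (0 : ℝ) 1 := by
    rw [ae_iff]
    simp only [ν, Measure.smul_apply, Measure.coe_finsetSum, Finset.sum_apply, smul_eq_mul,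
      mul_eq_zero, Finset.sum_eq_zero_iff]
    exact Or.inr fun i hi => by simpa using hx i hi
  have hmgf := (hasSubgaussianMGF_of_mem_Icc aemeasurable_id hb).mgf_le t
  rw [mgf, hint, hint] at hmgf
  set m := (∑ i ∈ U, x i) / #U
  have hcentered : ∑ i ∈ U, exp (t * (x i - m)) ≤ #U * exp (t ^ 2 / 8) := by
    rw [div_le_iff₀ (by exact_mod_cast hU.card_pos)] at hmgf
    have hc : (((‖(1 : ℝ) - 0‖₊ / 2) ^ 2 : ℝ≥0) : ℝ) * t ^ 2 / 2 = t ^ 2 / 8 := by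
      norm_num; ring
    simpa only [hc, id, mul_comm (exp _)] using hmgf
  calc ∑ i ∈ U, exp (t * x i) = (∑ i ∈ U, exp (t * (x i - m))) * exp (t * m) := by
        rw [sum_mul]
        exact sum_congr rfl fun i _ => by rw [← exp_add]; ring_nf
    _ ≤ #U * exp (t ^ 2 / 8) * exp (t * m) := by gcongr
    _ = #U * exp (t * m + t ^ 2 / 8) := by rw [exp_add]; ring

theorem sum_sum_powersetCard_erase_insert {ι M : Type*} [DecidableEq ι] [AddCommMonoid M]
    (U : Finset ι) (k : ℕ) (F : Finset ι → M) :
    ∑ i ∈ U, ∑ K ∈ (U.erase i).powersetCard k, F (insert i K) =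
      (k + 1) • ∑ K ∈ U.powersetCard (k + 1), F K := by
  calc ∑ i ∈ U, ∑ K ∈ (U.erase i).powersetCard k, F (insert i K)
      = ∑ i ∈ U, ∑ K ∈ U.powersetCard (k + 1) with i ∈ K, F K := by
        refine sum_congr rfl fun i hi =>
          sum_nbij' (insert i) (·.erase i) ?_ ?_ ?_ ?_ fun _ _ => rfl <;>
        · intro K hK
          simp only [mem_filter, mem_powersetCard] at hK ⊢
          grind
    _ = ∑ K ∈ U.powersetCard (k + 1), ∑ i ∈ K, F K :=
        sum_comm' fun i K => by simp only [mem_filter, mem_powersetCard]; grind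
    _ = (k + 1) • ∑ K ∈ U.powersetCard (k + 1), F K := by
        rw [smul_sum]
        exact sum_congr rfl fun K hK => by rw [sum_const, (mem_powersetCard.mp hK).2]

theorem serfling_exponent_step {k N : ℝ} (hk : 0 ≤ k) (hkN : k + 1 ≤ N) (S t : ℝ) :
    t * k * (S / (N - 1)) + k * (N - k) / (N - 1) * t ^ 2 / 8 +
        (t * (1 - k / (N - 1)) * (S / N) + (t * (1 - k / (N - 1))) ^ 2 / 8) ≤
      t * (k + 1) * (S / N) + (k + 1) * (N - (k + 1) + 1) / N * t ^ 2 / 8 := by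
  rcases (show 1 ≤ N by linarith).eq_or_lt with rfl | hN
  · obtain rfl : k = 0 := by linarith
    norm_num
  have hd : 0 < N - 1 := by linarith
  have hmean : t * k * (S / (N - 1)) + t * (1 - k / (N - 1)) * (S / N) =
      t * (k + 1) * (S / N) := by
    field_simp
    ring
  have hgap : (k + 1) * (N - (k + 1) + 1) / N - (k * (N - k) / (N - 1) + (1 - k / (N - 1)) ^ 2) =
      k * (N - 1 - k) / ((N - 1) ^ 2 * N) := by
    field_simp
    ring
  have hgap_nonneg : 0 ≤ k * (N - 1 - k) / ((N - 1) ^ 2 * N) :=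
    div_nonneg (mul_nonneg hk (by linarith)) (by positivity)
  have hvar : k * (N - k) / (N - 1) + (1 - k / (N - 1)) ^ 2 ≤ (k + 1) * (N - (k + 1) + 1) / N := by
    linarith
  nlinarith [mul_le_mul_of_nonneg_right hvar (sq_nonneg t)]

theorem sum_powersetCard_exp_le {ι : Type*} [DecidableEq ι] {x : ι → ℝ} (t : ℝ) {k : ℕ}
    {U : Finset ι} (hx : ∀ i ∈ U, x i ∈ Set.Icc 0 1) (hk : k ≤ #U) :
    ∑ K ∈ U.powersetCard k, exp (t * ∑ i ∈ K, x i) ≤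
      (#U).choose k * exp (t * k * ((∑ i ∈ U, x i) / #U) + k * (#U - k + 1) / #U * t ^ 2 / 8) := by
  induction k generalizing U with
  | zero => simp
  | succ k ih =>
    have hU : U.Nonempty := card_pos.mp (by omega)
    have hkN : (k : ℝ) + 1 ≤ #U := by exact_mod_cast hk
    set N : ℝ := ((#U : ℕ) : ℝ)
    set S := ∑ i ∈ U, x i
    set c := 1 - k / (N - 1)
    set A := t * k * (S / (N - 1)) + k * (N - k) / (N - 1) * t ^ 2 / 8
    have hterm (i) (hi : i ∈ U) :
        ∑ K ∈ (U.erase i).powersetCard k, exp (t * ∑ j ∈ insert i K, x j) ≤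
          (#U - 1).choose k * exp A * exp (t * c * x i) := by
      have hU' : #(U.erase i) = #U - 1 := card_erase_of_mem hi
      have hN' : (#(U.erase i) : ℝ) = N - 1 := by rw [hU', Nat.cast_sub (by omega)]; simp [N]
      have hih := ih (fun j hj => hx j (mem_of_mem_erase hj)) (by omega : k ≤ #(U.erase i))
      rw [hN', hU', sum_erase_eq_sub hi] at hih
      calc ∑ K ∈ (U.erase i).powersetCard k, exp (t * ∑ j ∈ insert i K, x j)
          = exp (t * x i) * ∑ K ∈ (U.erase i).powersetCard k, exp (t * ∑ j ∈ K, x j) := by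
            rw [mul_sum]
            refine sum_congr rfl fun K hK => ?_
            rw [sum_insert fun h => notMem_erase i U ((mem_powersetCard.mp hK).1 h), mul_add,
              exp_add]
        _ ≤ exp (t * x i) * ((#U - 1).choose k *
              exp (t * k * ((S - x i) / (N - 1)) + k * (N - 1 - k + 1) / (N - 1) * t ^ 2 / 8)) := by
            gcongr
        _ = (#U - 1).choose k * exp (A + t * c * x i) := by
            rw [mul_left_comm, ← exp_add]
            congr 2
            simp only [A, c]
            ring
        _ = (#U - 1).choose k * exp A * exp (t * c * x i) := by rw [exp_add, ← mul_assoc]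
    have hchoose : ((#U - 1).choose k : ℝ) * N = (k + 1) * (#U).choose (k + 1) := by
      have := Nat.add_one_mul_choose_eq (#U - 1) k
      rw [Nat.sub_add_cancel (by omega)] at this
      simp only [N]
      exact_mod_cast (mul_comm _ _).trans (this.trans (mul_comm _ _))
    have hhoeffding := sum_exp_le_card_mul_exp_mean hU hx (t * c)
    have hexp := serfling_exponent_step k.cast_nonneg hkN S t
    refine le_of_mul_le_mul_left ?_ (by positivity : (0 : ℝ) < k + 1)
    push_cast
    calc (k + 1 : ℝ) * ∑ K ∈ U.powersetCard (k + 1), exp (t * ∑ i ∈ K, x i)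
        = ∑ i ∈ U, ∑ K ∈ (U.erase i).powersetCard k, exp (t * ∑ j ∈ insert i K, x j) := by
          rw [sum_sum_powersetCard_erase_insert U k fun K => exp (t * ∑ j ∈ K, x j),
            nsmul_eq_mul]
          push_cast
          rfl
      _ ≤ ∑ i ∈ U, (#U - 1).choose k * exp A * exp (t * c * x i) := sum_le_sum hterm
      _ = (#U - 1).choose k * exp A * ∑ i ∈ U, exp (t * c * x i) := by rw [mul_sum]
      _ ≤ (#U - 1).choose k * exp A * (N * exp (t * c * (S / N) + (t * c) ^ 2 / 8)) := by
          gcongr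
      _ = (#U - 1).choose k * N * exp (A + (t * c * (S / N) + (t * c) ^ 2 / 8)) := by
          rw [exp_add A]; ring
      _ ≤ (#U - 1).choose k * N *
            exp (t * (k + 1) * (S / N) + (k + 1) * (N - (k + 1) + 1) / N * t ^ 2 / 8) := by
          gcongr
      _ = _ := by rw [hchoose]; ring

theorem card_filter_le_sum_exp {α : Type*} (s : Finset α) (f : α → ℝ) {t : ℝ} (ht : 0 ≤ t)
    (θ : ℝ) : (#{a ∈ s | θ ≤ f a} : ℝ) ≤ ∑ a ∈ s, exp (t * (f a - θ)) := by
  rw [card_filter, Nat.cast_sum]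
  refine sum_le_sum fun a _ => ?_
  split_ifs with h
  · simpa using one_le_exp (mul_nonneg ht (sub_nonneg.mpr h))
  · simpa using (exp_pos _).le

theorem card_powersetCard_filter_mean_le {ι : Type*} [DecidableEq ι] {x : ι → ℝ} {U : Finset ι}
    (hx : ∀ i ∈ U, x i ∈ Set.Icc 0 1) {m k : ℕ} (hm : 0 < m) (hk : 0 < k) (hU : #U = m + k)
    {γ : ℝ} (hγ : 0 ≤ γ) :
    (#{K ∈ U.powersetCard k | (∑ i ∈ U \ K, x i) / m + γ ≤ (∑ i ∈ K, x i) / k} : ℝ) ≤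
      (m + k).choose k * exp (-2 * γ ^ 2 * (k * m ^ 2 / ((k + m) * (m + 1)))) := by
  have hm' : (0 : ℝ) < m := by exact_mod_cast hm
  have hk' : (0 : ℝ) < k := by exact_mod_cast hk
  set S := ∑ i ∈ U, x i
  set θ := (k * S + γ * k * m) / (m + k)
  -- the Chernoff parameter minimising the resulting exponent
  set t := 4 * γ * m / (m + 1)
  have hlarge : ∀ K ∈ U.powersetCard k,
      (∑ i ∈ U \ K, x i) / m + γ ≤ (∑ i ∈ K, x i) / k → θ ≤ ∑ i ∈ K, x i := by
    intro K hK h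
    rw [sum_sdiff_eq_sub (mem_powersetCard.mp hK).1, div_add' _ _ _ hm'.ne',
      div_le_div_iff₀ hm' hk'] at h
    rw [div_le_iff₀ (by positivity)]
    linarith
  have hmgf := sum_powersetCard_exp_le t hx (hU ▸ Nat.le_add_left k m)
  rw [hU] at hmgf
  push_cast at hmgf
  calc (#{K ∈ U.powersetCard k | (∑ i ∈ U \ K, x i) / m + γ ≤ (∑ i ∈ K, x i) / k} : ℝ)
      ≤ #{K ∈ U.powersetCard k | θ ≤ ∑ i ∈ K, x i} := by
        exact_mod_cast card_le_card (monotone_filter_right _ hlarge)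
    _ ≤ ∑ K ∈ U.powersetCard k, exp (t * (∑ i ∈ K, x i - θ)) :=
        card_filter_le_sum_exp _ _ (by positivity) θ
    _ = exp (-(t * θ)) * ∑ K ∈ U.powersetCard k, exp (t * ∑ i ∈ K, x i) := by
        rw [mul_sum]
        exact sum_congr rfl fun K _ => by rw [← exp_add]; ring_nf
    _ ≤ exp (-(t * θ)) * ((m + k).choose k *
          exp (t * k * (S / (m + k)) + k * (m + k - k + 1) / (m + k) * t ^ 2 / 8)) := by
        gcongr
    _ = (m + k).choose k * exp (-2 * γ ^ 2 * (k * m ^ 2 / ((k + m) * (m + 1)))) := by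
        rw [mul_left_comm, ← exp_add]
        congr 2
        simp only [θ, t]
        field_simp
        ring

/-- The assignments realising the event `Ω(m, k)`: `a i = 0` puts position `i` in the test set,
`a i = 1` in the key set and `a i = 2` in neither. -/
def assignmentsWithCard (ι : Type*) [Fintype ι] [DecidableEq ι] (m k : ℕ) :
    Finset (ι → Fin 3) :=
  {a | #{i | a i = 0} = m ∧ #{i | a i = 1} = k}

theorem sum_assignmentsWithCard {ι M : Type*} [Fintype ι] [DecidableEq ι] [AddCommMonoid M]
    (m k : ℕ) (f : Finset ι → Finset ι → M) :
    ∑ a ∈ assignmentsWithCard ι m k, f {i | a i = 0} {i | a i = 1} =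
      ∑ U ∈ univ.powersetCard (m + k), ∑ K ∈ U.powersetCard k, f (U \ K) K := by
  let toFun (a : ι → Fin 3) : (_ : Finset ι) × Finset ι :=
    ⟨({i | a i = 0} : Finset ι) ∪ ({i | a i = 1} : Finset ι), ({i | a i = 1} : Finset ι)⟩
  let invFun (p : (_ : Finset ι) × Finset ι) (i : ι) : Fin 3 :=
    if i ∈ p.2 then 1 else if i ∈ p.1 then 0 else 2
  have invFun_eq_one (p : (_ : Finset ι) × Finset ι) :
      ({i | invFun p i = 1} : Finset ι) = p.2 := by
    ext i; simp only [mem_filter, mem_univ, true_and, invFun]; split_ifs <;> simp_all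
  have invFun_eq_zero (p : (_ : Finset ι) × Finset ι) :
      ({i | invFun p i = 0} : Finset ι) = p.1 \ p.2 := by
    ext i; simp only [mem_filter, mem_univ, true_and, mem_sdiff, invFun]; split_ifs <;> simp_all
  have hdisj (a : ι → Fin 3) :
      Disjoint ({i | a i = 0} : Finset ι) ({i | a i = 1} : Finset ι) :=
    disjoint_filter.mpr fun i _ h => by simp [h]
  rw [sum_sigma']
  refine sum_nbij' toFun invFun ?_ ?_ ?_ ?_ ?_
  · intro a ha
    simp only [assignmentsWithCard, mem_filter, mem_univ, true_and, mem_sigma,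
      mem_powersetCard] at ha ⊢
    refine ⟨⟨subset_univ _, ?_⟩, subset_union_right, ha.2⟩
    rw [card_union_of_disjoint (hdisj a), ha.1, ha.2]
  · intro p hp
    simp only [assignmentsWithCard, mem_filter, mem_univ, true_and, mem_sigma,
      mem_powersetCard] at hp ⊢
    rw [invFun_eq_zero, invFun_eq_one, card_sdiff_of_subset hp.2.1, hp.1.2, hp.2.2]
    exact ⟨by omega, rfl⟩
  · intro a _
    funext i
    simp only [toFun, invFun, mem_union, mem_filter, mem_univ, true_and]
    split_ifs <;> omega
  · intro p hp
    simp only [mem_sigma, mem_powersetCard] at hp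
    simp only [toFun, invFun_eq_zero, invFun_eq_one, sdiff_union_of_subset hp.2.1]
  · intro a _
    simp only [toFun, union_sdiff_cancel_right (hdisj a)]

theorem card_assignmentsWithCard_filter_mean_le {ι : Type*} [Fintype ι] [DecidableEq ι]
    {x : ι → ℝ} (hx : ∀ i, x i ∈ Set.Icc 0 1) {m k : ℕ} (hm : 0 < m) (hk : 0 < k) {γ : ℝ}
    (hγ : 0 ≤ γ) :
    (#{a ∈ assignmentsWithCard ι m k |
        (∑ i with a i = 0, x i) / m + γ ≤ (∑ i with a i = 1, x i) / k} : ℝ) ≤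
      #(assignmentsWithCard ι m k) * exp (-2 * γ ^ 2 * (k * m ^ 2 / ((k + m) * (m + 1)))) := by
  rw [← sum_boole, card_eq_sum_ones, Nat.cast_sum, sum_mul,
    sum_assignmentsWithCard m k
      fun T K => if (∑ i ∈ T, x i) / m + γ ≤ (∑ i ∈ K, x i) / k then (1 : ℝ) else 0,
    sum_assignmentsWithCard m k
      fun _ _ => ((1 : ℕ) : ℝ) * exp (-2 * γ ^ 2 * (k * m ^ 2 / ((k + m) * (m + 1))))]
  refine sum_le_sum fun U hU => ?_
  rw [sum_boole, ← sum_mul, ← Nat.cast_sum, ← card_eq_sum_ones, card_powersetCard,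
    (mem_powersetCard.mp hU).2]
  exact card_powersetCard_filter_mean_le (fun i _ => hx i) hm hk (mem_powersetCard.mp hU).2 hγ

theorem card_filter_eq_two {ι : Type*} [Fintype ι] (a : ι → Fin 3) :
    #{i | a i = 2} = Fintype.card ι - (#{i | a i = 0} + #{i | a i = 1}) := by
  have := card_eq_sum_card_fiberwise (s := univ) (t := univ) (f := a) fun _ _ => mem_univ _
  rw [Fin.sum_univ_three, card_univ] at this
  omega

theorem measure_preimage_two_eq {Ω : Type*} [MeasurableSpace Ω] {μ : Measure Ω}
    [IsProbabilityMeasure μ] {A : Ω → Fin 3} (hA : Measurable A) :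
    μ (A ⁻¹' {2}) = 1 - (μ (A ⁻¹' {0}) + μ (A ⁻¹' {1})) := by
  have hcompl : A ⁻¹' {2} = (A ⁻¹' {0} ∪ A ⁻¹' {1})ᶜ := by
    ext ω
    simp only [Set.mem_preimage, Set.mem_singleton_iff, Set.mem_compl_iff, Set.mem_union]
    omega
  rw [hcompl, prob_compl_eq_one_sub ((hA (measurableSet_singleton 0)).union
      (hA (measurableSet_singleton 1))),
    measure_union (Set.disjoint_left.mpr fun ω h0 h1 => by simp_all)
      (hA (measurableSet_singleton 1))]

namespace ProbabilityTheory

theorem iIndepFun.measure_preimage_singleton_eq_prod_pow {Ω ι κ : Type*} [MeasurableSpace Ω]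
    {μ : Measure Ω} [Fintype ι] [Fintype κ] [DecidableEq κ] [MeasurableSpace κ]
    [MeasurableSingletonClass κ] {A : ι → Ω → κ} (hA : iIndepFun A μ) {p : κ → ℝ≥0∞}
    (hp : ∀ i v, μ (A i ⁻¹' {v}) = p v) (a : ι → κ) :
    μ ((fun ω i => A i ω) ⁻¹' {a}) = ∏ v, p v ^ #{i | a i = v} := by
  have hpre : (fun ω i => A i ω) ⁻¹' {a} = ⋂ i ∈ (univ : Finset ι), A i ⁻¹' {a i} := by
    ext ω; simp [funext_iff]
  rw [hpre, hA.measure_inter_preimage_eq_mul _ fun i _ => measurableSet_singleton (a i)]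
  simp only [hp]
  rw [← prod_fiberwise' univ a p]
  exact prod_congr rfl fun v _ => by rw [← prod_const]

theorem iIndepFun.measure_preimage_singleton_assignment {Ω ι : Type*} [MeasurableSpace Ω]
    {μ : Measure Ω} [IsProbabilityMeasure μ] [Fintype ι] {A : ι → Ω → Fin 3}
    (hA : iIndepFun A μ) (hAmeas : ∀ i, Measurable (A i)) {pt pk : ℝ≥0∞}
    (hpt : ∀ i, μ (A i ⁻¹' {0}) = pt) (hpk : ∀ i, μ (A i ⁻¹' {1}) = pk) {a : ι → Fin 3}
    {m k : ℕ} (hm : #{i | a i = 0} = m) (hk : #{i | a i = 1} = k) :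
    μ ((fun ω i => A i ω) ⁻¹' {a}) =
      pt ^ m * pk ^ k * (1 - (pt + pk)) ^ (Fintype.card ι - (m + k)) := by
  have hmarg (i : ι) (v : Fin 3) : μ (A i ⁻¹' {v}) = ![pt, pk, 1 - (pt + pk)] v := by
    fin_cases v
    · exact hpt i
    · exact hpk i
    · exact (measure_preimage_two_eq (hAmeas i)).trans (by rw [hpt i, hpk i]; rfl)
  rw [hA.measure_preimage_singleton_eq_prod_pow hmarg, Fin.prod_univ_three, card_filter_eq_two,
    hm, hk]
  rfl

theorem IndepFun.cond_le_of_card_filter_le {Ω α β : Type*} [MeasurableSpace Ω] {μ : Measure Ω}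
    [IsProbabilityMeasure μ] [MeasurableSpace α] [MeasurableSpace β] [MeasurableSingletonClass β]
    {Y : Ω → α} {Z : Ω → β} (hYZ : IndepFun Y Z μ) (hY : Measurable Y) (hZ : Measurable Z)
    {C : Finset β} {w : ℝ≥0∞} (hw : ∀ b ∈ C, μ (Z ⁻¹' {b}) = w) {V : β → Set α}
    (hV : ∀ b, MeasurableSet (V b)) [∀ ω, DecidablePred fun b => Y ω ∈ V b] {ε : ℝ≥0∞}
    (hcount : ∀ ω, (#{b ∈ C | Y ω ∈ V b} : ℝ≥0∞) ≤ #C * ε) :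
    μ[{ω | Y ω ∈ V (Z ω)} | Z ⁻¹' C] ≤ ε := by
  have hZC : μ (Z ⁻¹' C) = #C * w := by
    rw [← sum_measure_preimage_singleton C fun b _ => hZ (measurableSet_singleton b),
      sum_congr rfl hw, sum_const, nsmul_eq_mul]
  have hsum : ∑ b ∈ C, μ (Y ⁻¹' V b) ≤ #C * ε := by
    calc ∑ b ∈ C, μ (Y ⁻¹' V b) = ∫⁻ ω, ∑ b ∈ C, (Y ⁻¹' V b).indicator 1 ω ∂μ := by
          rw [lintegral_finsetSum _ fun b _ => measurable_one.indicator (hY (hV b))]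
          simp only [lintegral_indicator_one (hY (hV _))]
      _ = ∫⁻ ω, (#{b ∈ C | Y ω ∈ V b} : ℝ≥0∞) ∂μ := by
          congr 1
          funext ω
          rw [← sum_boole]
          exact sum_congr rfl fun b _ => by by_cases h : Y ω ∈ V b <;> simp [h]
      _ ≤ ∫⁻ _, #C * ε ∂μ := lintegral_mono hcount
      _ = #C * ε := by simp
  have hjoint : μ (Z ⁻¹' C ∩ {ω | Y ω ∈ V (Z ω)}) ≤ μ (Z ⁻¹' C) * ε := by
    calc μ (Z ⁻¹' C ∩ {ω | Y ω ∈ V (Z ω)}) ≤ μ (⋃ b ∈ C, Y ⁻¹' V b ∩ Z ⁻¹' {b}) :=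
          measure_mono fun ω ⟨hC, hV⟩ => Set.mem_biUnion hC ⟨hV, rfl⟩
      _ ≤ ∑ b ∈ C, μ (Y ⁻¹' V b ∩ Z ⁻¹' {b}) := measure_biUnion_finset_le _ _
      _ = ∑ b ∈ C, μ (Y ⁻¹' V b) * w := sum_congr rfl fun b hb => by
          rw [hYZ.measure_inter_preimage_eq_mul _ _ (hV b) (measurableSet_singleton b), hw b hb]
      _ ≤ #C * ε * w := by rw [← sum_mul]; gcongr
      _ = μ (Z ⁻¹' C) * ε := by rw [hZC]; ring
  rw [cond_apply (hZ C.measurableSet)]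
  calc (μ (Z ⁻¹' C))⁻¹ * μ (Z ⁻¹' C ∩ {ω | Y ω ∈ V (Z ω)})
      ≤ (μ (Z ⁻¹' C))⁻¹ * (μ (Z ⁻¹' C) * ε) := by gcongr
    _ ≤ ε := by rw [← mul_assoc]; exact mul_le_of_le_one_left' (ENNReal.inv_mul_le_one _)

end ProbabilityTheory

/-- **Serfling with IID sampling.** Bit-valued random variables `X₁,…,Xₙ` (not assumed
independent); each position is independently assigned to the test set (`A i = 0`) with
probability `p_t`, to the key set (`A i = 1`) with probability `p_k`, or to neither
(`A i = 2`), independently of the `Xᵢ`.  Conditioned on the event that exactly `n_X`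
positions are in the test set and exactly `n_K` in the key set,
`Pr( (1/n_K)·Σ_{key} Xᵢ ≥ (1/n_X)·Σ_{test} Xᵢ + γ )
  ≤ exp(−2γ² n_K n_X² / ((n_K+n_X)(n_X+1)))`. -/
theorem serfling_iid_sampling
    {Ω : Type*} [MeasurableSpace Ω] (μ : Measure Ω) [IsProbabilityMeasure μ]
    (n : ℕ) (X : Fin n → Ω → ℝ)
    (hX01 : ∀ i ω, X i ω = 0 ∨ X i ω = 1)
    (hXmeas : ∀ i, Measurable (X i))
    (A : Fin n → Ω → Fin 3) (hAmeas : ∀ i, Measurable (A i))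
    (pt pk : ENNReal)
    (hpt : ∀ i, μ {ω | A i ω = 0} = pt)
    (hpk : ∀ i, μ {ω | A i ω = 1} = pk)
    (hAindep : iIndepFun A μ)
    (hXA : IndepFun (fun ω => fun i => X i ω) (fun ω => fun i => A i ω) μ)
    (nX nK : ℕ) (hnX : 0 < nX) (hnK : 0 < nK)
    (γ : ℝ) (hγ : 0 < γ) :
    (μ[|{ω | (Finset.univ.filter fun i => A i ω = 0).card = nX ∧
              (Finset.univ.filter fun i => A i ω = 1).card = nK}])
      {ω | (∑ i ∈ Finset.univ.filter (fun i => A i ω = 1), X i ω) / (nK : ℝ) ≥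
            (∑ i ∈ Finset.univ.filter (fun i => A i ω = 0), X i ω) / (nX : ℝ) + γ} ≤
      ENNReal.ofReal
        (Real.exp (-2 * γ ^ 2 * ((nK : ℝ) * (nX : ℝ) ^ 2 /
          (((nK : ℝ) + (nX : ℝ)) * ((nX : ℝ) + 1))))) := by
  have hE : {ω | #{i | A i ω = 0} = nX ∧ #{i | A i ω = 1} = nK} =
      (fun ω i => A i ω) ⁻¹' assignmentsWithCard (Fin n) nX nK := by
    ext ω; simp [assignmentsWithCard]
  have hlaw (a) (ha : a ∈ assignmentsWithCard (Fin n) nX nK) :=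
    hAindep.measure_preimage_singleton_assignment hAmeas hpt hpk (mem_filter.mp ha).2.1
      (mem_filter.mp ha).2.2
  rw [hE]
  refine hXA.cond_le_of_card_filter_le (measurable_pi_lambda _ hXmeas)
    (measurable_pi_lambda _ hAmeas) hlaw
    (V := fun a => {v | (∑ i with a i = 0, v i) / nX + γ ≤ (∑ i with a i = 1, v i) / nK})
    (fun a => measurableSet_le (by fun_prop) (by fun_prop)) fun ω => ?_
  have hx (i : Fin n) : X i ω ∈ Set.Icc 0 1 := by rcases hX01 i ω with h | h <;> simp [h]
  rw [← ENNReal.ofReal_natCast, ← ENNReal.ofReal_natCast #(assignmentsWithCard _ _ _),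
    ← ENNReal.ofReal_mul (by positivity)]
  exact ENNReal.ofReal_le_ofReal (card_assignmentsWithCard_filter_mean_le hx hnX hnK hγ.le)
end

section
/- Let ρ be a state on Q^⊗n (n-fold tensor product of a finite-dimensional Hilbert space). Let P and P′ be operators with 0 ≤ P ≤ P′ ≤ I. Let N_P denote the random number of 'P' outcomes when each of the n subsystems of ρ is measured with the binary POVM {P, I−P}, and N_{P′} similarly for {P′, I−P′}. Then for every threshold e, Pr(N_P/n ≥ e) ≤ Pr(N_{P′}/n ≥ e). -/
open Matrix BigOperators
open scoped ComplexOrder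

/-- The product POVM element on `Q^⊗n` corresponding to outcome string `s`, where each
subsystem is measured with the binary POVM `{P, I − P}` (`s i = true` means `P`-outcome). -/
noncomputable def povmProd {d n : ℕ} (P : Matrix (Fin d) (Fin d) ℂ) (s : Fin n → Bool) :
    Matrix (Fin n → Fin d) (Fin n → Fin d) ℂ :=
  Matrix.of fun x y => ∏ i, (if s i then P else (1 : Matrix (Fin d) (Fin d) ℂ) - P) (x i) (y i)

/-- `Pr(N_P / n ≥ e)`: the probability (via Born's rule) that, measuring each of the `n`
subsystems of `ρ` with `{P, I − P}`, the number of `P`-outcomes is at least `e·n`. -/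
noncomputable def tailProb {d n : ℕ} (ρ : Matrix (Fin n → Fin d) (Fin n → Fin d) ℂ)
    (P : Matrix (Fin d) (Fin d) ℂ) (e : ℝ) : ℝ :=
  ∑ s : Fin n → Bool,
    if e * n ≤ ((Finset.univ.filter fun i => s i = true).card : ℝ)
    then ((povmProd P s * ρ).trace).re else 0

/-!
Refine both binary measurements into the single per-site three-outcome POVM
`{P, P' - P, 1 - P'}`. Each outcome string `g` of the refined measurement is assigned the same
nonnegative Born weight in both coarse-grainings, and its number of `P`-outcomes (sites with
`g i = 0`) is at most its number of `P'`-outcomes (sites with `g i ≠ 2`). So the event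
`N_P ≥ e n` is contained in the event `N_{P'} ≥ e n`.
-/

namespace Matrix

variable {ι l m n R : Type*} [Fintype ι]

def piKronecker [CommMonoid R] (A : ι → Matrix m n R) : Matrix (ι → m) (ι → n) R :=
  of fun x y => ∏ i, A i (x i) (y i)

theorem piKronecker_mul_piKronecker [CommSemiring R] [DecidableEq ι] [Fintype m]
    (A : ι → Matrix l m R) (B : ι → Matrix m n R) :
    piKronecker A * piKronecker B = piKronecker fun i => A i * B i := by
  ext x y
  simp only [piKronecker, mul_apply, of_apply, Fintype.prod_sum, Finset.prod_mul_distrib]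

theorem conjTranspose_piKronecker [CommSemiring R] [StarRing R] (A : ι → Matrix m n R) :
    (piKronecker A)ᴴ = piKronecker fun i => (A i)ᴴ := by
  ext x y
  simp [piKronecker, star_prod]

theorem piKronecker_sum_fiber [CommSemiring R] [DecidableEq ι] {κ β : Type*} [Fintype κ]
    [DecidableEq β] (M : κ → Matrix m n R) (φ : κ → β) (s : ι → β) :
    piKronecker (fun i => ∑ k with φ k = s i, M k) =
      ∑ g : ι → κ with φ ∘ g = s, piKronecker fun i => M (g i) := by
  have fibers : Fintype.piFinset (fun i => ({k | φ k = s i} : Finset κ)) =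
      ({g | φ ∘ g = s} : Finset (ι → κ)) := by
    ext g
    simp [funext_iff]
  ext x y
  simp only [piKronecker, of_apply, sum_apply, Finset.prod_univ_sum, fibers]

section RCLike

variable {𝕜 : Type*} [RCLike 𝕜] [Fintype m] [DecidableEq m]
open scoped MatrixOrder

theorem PosSemidef.piKronecker [DecidableEq ι] {A : ι → Matrix m m 𝕜}
    (hA : ∀ i, (A i).PosSemidef) : (Matrix.piKronecker A).PosSemidef := by
  choose B hB using fun i => CStarAlgebra.nonneg_iff_eq_star_mul_self.mp (hA i).nonneg
  rw [funext hB]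
  simpa only [star_eq_conjTranspose, conjTranspose_piKronecker, piKronecker_mul_piKronecker]
    using posSemidef_conjTranspose_mul_self (Matrix.piKronecker B)

theorem PosSemidef.trace_mul_nonneg {A B : Matrix m m 𝕜} (hA : A.PosSemidef)
    (hB : B.PosSemidef) : 0 ≤ (A * B).trace := by
  obtain ⟨C, rfl⟩ := CStarAlgebra.nonneg_iff_eq_star_mul_self.mp hA.nonneg
  rw [mul_assoc, trace_mul_comm, star_eq_conjTranspose]
  exact (hB.mul_mul_conjTranspose_same C).trace_nonneg

end RCLike

end Matrix

open Finset

theorem sum_ite_re_trace_piKronecker_fiber {ι κ β m : Type*} [Fintype ι] [DecidableEq ι]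
    [Fintype κ] [Fintype β] [DecidableEq β] [Fintype m] (ρ : Matrix (ι → m) (ι → m) ℂ)
    (M : κ → Matrix m m ℂ) (φ : κ → β) (p : (ι → β) → Prop) [DecidablePred p] :
    ∑ s : ι → β, (if p s then ((piKronecker (fun i => ∑ k with φ k = s i, M k) * ρ).trace).re
      else 0) =
      ∑ g : ι → κ, if p (φ ∘ g) then ((piKronecker (fun i => M (g i)) * ρ).trace).re else 0 := by
  rw [← sum_fiberwise univ (φ ∘ ·)]
  refine sum_congr rfl fun s _ => ?_
  rw [piKronecker_sum_fiber, sum_mul, trace_sum, Complex.re_sum]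
  split_ifs with hs
  · exact sum_congr rfl fun g hg => by simp [(mem_filter.mp hg).2, hs]
  · exact (sum_eq_zero fun g hg => by simp [(mem_filter.mp hg).2, hs]).symm

theorem tailProb_eq_sum_refinement {d n : ℕ} {κ : Type*} [Fintype κ]
    (ρ : Matrix (Fin n → Fin d) (Fin n → Fin d) ℂ) (Q : Matrix (Fin d) (Fin d) ℂ) (e : ℝ)
    (M : κ → Matrix (Fin d) (Fin d) ℂ) (φ : κ → Bool)
    (hQ : ∀ b, (if b then Q else 1 - Q) = ∑ k with φ k = b, M k) :
    tailProb ρ Q e = ∑ g : Fin n → κ, if e * n ≤ (#{i | φ (g i) = true} : ℝ)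
      then ((piKronecker (fun i => M (g i)) * ρ).trace).re else 0 := by
  have povmProd_eq (s : Fin n → Bool) :
      povmProd Q s = piKronecker fun i => ∑ k with φ k = s i, M k := by
    simp only [← hQ]
    rfl
  simp only [tailProb, povmProd_eq]
  exact sum_ite_re_trace_piKronecker_fiber ρ M φ _

theorem tailProb_mono_general {d n : ℕ}
    (ρ : Matrix (Fin n → Fin d) (Fin n → Fin d) ℂ)
    (hρ : ρ.PosSemidef)
    (P P' : Matrix (Fin d) (Fin d) ℂ)
    (hP : P.PosSemidef) (hPP' : (P' - P).PosSemidef)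
    (hP'le : ((1 : Matrix (Fin d) (Fin d) ℂ) - P').PosSemidef)
    (e : ℝ) :
    tailProb ρ P e ≤ tailProb ρ P' e := by
  set M : Fin 3 → Matrix (Fin d) (Fin d) ℂ := ![P, P' - P, 1 - P']
  have hM : ∀ k, (M k).PosSemidef := by
    intro k
    fin_cases k
    exacts [hP, hPP', hP'le]
  have refines_P : ∀ b, (if b then P else 1 - P) = ∑ k with decide (k = 0) = b, M k := by
    rintro (_ | _) <;> simp [sum_filter, Fin.sum_univ_three, M]
  have refines_P' : ∀ b, (if b then P' else 1 - P') = ∑ k with decide (k ≠ 2) = b, M k := by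
    rintro (_ | _) <;> simp [sum_filter, Fin.sum_univ_three, M]
  rw [tailProb_eq_sum_refinement ρ P e M _ refines_P,
    tailProb_eq_sum_refinement ρ P' e M _ refines_P', ← sum_filter, ← sum_filter]
  refine sum_le_sum_of_subset_of_nonneg
    (monotone_filter_right _ fun g _ hg => hg.trans ?_) fun g _ _ => ?_
  · exact_mod_cast card_le_card (monotone_filter_right _ fun i _ h => by simp_all)
  · exact (Complex.nonneg_iff.mp <|
      (PosSemidef.piKronecker fun i => hM (g i)).trace_mul_nonneg hρ).1

/-- **Monotonicity of outcome counts under Loewner order.** If `0 ≤ P ≤ P′ ≤ I`, then for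
every threshold `e`, `Pr(N_P/n ≥ e) ≤ Pr(N_{P′}/n ≥ e)`. -/
theorem tailProb_mono {d n : ℕ}
    (ρ : Matrix (Fin n → Fin d) (Fin n → Fin d) ℂ)
    (hρ : ρ.PosSemidef) (hρtr : ρ.trace = 1)
    (P P' : Matrix (Fin d) (Fin d) ℂ)
    (hP : P.PosSemidef) (hPP' : (P' - P).PosSemidef)
    (hP'le : ((1 : Matrix (Fin d) (Fin d) ℂ) - P').PosSemidef)
    (e : ℝ) :
    tailProb ρ P e ≤ tailProb ρ P' e :=
  tailProb_mono_general ρ hρ P P' hP hPP' hP'le e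
end

section
/- Let ρ be a (sub-normalized) classical-quantum state on registers X ⊗ Y where X and Y each hold n-bit strings, and let e_XY denote the fraction of positions i with X_i ≠ Y_i. Suppose there exists an event Ω containing {e_XY > e_max} with Pr(Ω)_ρ ≤ κ, where 0 ≤ e_max < 1/2. Then the smooth max-entropy satisfies H_max^{√κ}(X|Y)_ρ ≤ n·h(e_max), where h is the binary entropy function. -/
open BigOperators

/-- `n`-bit strings. -/
abbrev Str (n : ℕ) := Fin n → Bool

/-- Fraction of positions where the two strings disagree. -/
noncomputable def errFrac {n : ℕ} (x y : Str n) : ℝ :=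
  ((Finset.univ.filter fun i => x i ≠ y i).card : ℝ) / n

/-- Total mass (trace) of a classical sub-normalized state on `X ⊗ Y`. -/
noncomputable def mass {n : ℕ} (p : Str n → Str n → ℝ) : ℝ := ∑ x, ∑ y, p x y

/-- A sub-normalized classical (cq) state: pointwise nonnegative with total mass at most 1. -/
def IsSubState {n : ℕ} (p : Str n → Str n → ℝ) : Prop :=
  (∀ x y, 0 ≤ p x y) ∧ mass p ≤ 1

/-- (Conditional) max-entropy `H_max(X|Y)` of a classical sub-normalized state:
`H_max(X|Y) = log₂ Σ_y (Σ_x √p(x,y))²`. -/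
noncomputable def Hmax {n : ℕ} (p : Str n → Str n → ℝ) : ℝ :=
  Real.logb 2 (∑ y, (∑ x, Real.sqrt (p x y)) ^ 2)

/-- Generalized fidelity between sub-normalized classical states. -/
noncomputable def genFid {n : ℕ} (p q : Str n → Str n → ℝ) : ℝ :=
  (∑ x, ∑ y, Real.sqrt (p x y * q x y)) + Real.sqrt ((1 - mass p) * (1 - mass q))

/-- Purified distance between sub-normalized classical states. -/
noncomputable def purDist {n : ℕ} (p q : Str n → Str n → ℝ) : ℝ :=
  Real.sqrt (1 - genFid p q ^ 2)

/-- Smooth max-entropy `H_max^ε(X|Y)`: the infimum of `H_max` over sub-normalized states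
within purified distance `ε` of `p`. -/
noncomputable def smoothHmax {n : ℕ} (ε : ℝ) (p : Str n → Str n → ℝ) : ℝ :=
  sInf {h : ℝ | ∃ q : Str n → Str n → ℝ, IsSubState q ∧ purDist p q ≤ ε ∧ h = Hmax q}

/-- Binary entropy (base 2), with the convention `h(0) = 0`. -/
noncomputable def binEnt2 (e : ℝ) : ℝ :=
  -(e * Real.logb 2 e) - (1 - e) * Real.logb 2 (1 - e)

/-!
Discard the event `Ω` from `p` and rescale by `(1 - Pr(Ω))⁻¹`. The result is a sub-normalized
state whose generalized fidelity with `p` is exactly `√(1 - Pr(Ω))`, so it lies within purified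
distance `√Pr(Ω) ≤ √κ` of `p`. It vanishes outside the pairs at Hamming distance at most
`⌊n e_max⌋`, so by Cauchy–Schwarz its max-entropy is at most `log₂` of the volume
`∑_{k ≤ n e_max} C(n, k)` of a Hamming ball, and that volume is at most `2 ^ (n h(e_max))`
because `e ^ k (1 - e) ^ (n - k) ≥ 2 ^ (-n h(e))` for `k ≤ n e ≤ n / 2`.
-/

open Finset Real

lemma binEnt2_eq_binEntropy_div_log_two (e : ℝ) : binEnt2 e = binEntropy e / log 2 := by
  simp only [binEnt2, binEntropy, logb, log_inv]
  ring

lemma binEnt2_nonneg {e : ℝ} (he0 : 0 ≤ e) (he1 : e ≤ 1) : 0 ≤ binEnt2 e := by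
  rw [binEnt2_eq_binEntropy_div_log_two]
  exact div_nonneg (binEntropy_nonneg he0 he1) (log_nonneg one_le_two)

lemma one_le_sum_range_choose (n m : ℕ) : 1 ≤ ∑ k ∈ range (m + 1), (n.choose k : ℝ) := by
  simpa using single_le_sum (f := fun k => (n.choose k : ℝ)) (fun k _ => by positivity)
    (mem_range.2 m.succ_pos)

lemma exp_neg_mul_binEntropy_le_pow_mul_pow {e : ℝ} (he0 : 0 < e) (he : e ≤ 1 / 2) {n k : ℕ}
    (hkn : k ≤ n) (hk : (k : ℝ) ≤ n * e) :
    exp (-(n * binEntropy e)) ≤ e ^ k * (1 - e) ^ (n - k) := by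
  have he1 : 0 < 1 - e := by linarith
  have hlog : log e ≤ log (1 - e) := log_le_log he0 (by linarith)
  have hexp : e ^ k * (1 - e) ^ (n - k) = exp (k * log e + (n - k : ℕ) * log (1 - e)) := by
    rw [exp_add, exp_nat_mul, exp_nat_mul, exp_log he0, exp_log he1]
  rw [hexp, exp_le_exp, Nat.cast_sub hkn, binEntropy, log_inv, log_inv]
  nlinarith

/-- Compare with the terms `k ≤ n e` of the binomial expansion of `(e + (1 - e)) ^ n`. -/
lemma sum_range_choose_le_exp_binEntropy {e : ℝ} (he0 : 0 ≤ e) (he : e ≤ 1 / 2) (n : ℕ) :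
    ∑ k ∈ range (⌊n * e⌋₊ + 1), (n.choose k : ℝ) ≤ exp (n * binEntropy e) := by
  rcases he0.eq_or_lt with rfl | he0
  · simp
  set m := ⌊n * e⌋₊
  have hmn : m ≤ n := Nat.floor_le_of_le (by nlinarith)
  suffices (∑ k ∈ range (m + 1), (n.choose k : ℝ)) * exp (-(n * binEntropy e)) ≤ 1 by
    rwa [exp_neg, ← div_eq_mul_inv, div_le_one (exp_pos _)] at this
  calc (∑ k ∈ range (m + 1), (n.choose k : ℝ)) * exp (-(n * binEntropy e))
      ≤ ∑ k ∈ range (m + 1), (n.choose k : ℝ) * (e ^ k * (1 - e) ^ (n - k)) := by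
        rw [sum_mul]
        gcongr with k hk
        have hkm : k ≤ m := Nat.lt_succ_iff.mp (mem_range.mp hk)
        exact exp_neg_mul_binEntropy_le_pow_mul_pow he0 he (hkm.trans hmn)
          ((Nat.cast_le.mpr hkm).trans (Nat.floor_le (by positivity)))
    _ ≤ ∑ k ∈ range (n + 1), (n.choose k : ℝ) * (e ^ k * (1 - e) ^ (n - k)) := by
        gcongr
        · intro k _ _
          have : 0 ≤ 1 - e := by linarith
          positivity
    _ = (e + (1 - e)) ^ n := by
        rw [add_pow]
        exact sum_congr rfl fun k _ => by ring
    _ = 1 := by simp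

lemma logb_sum_range_choose_le {e : ℝ} (he0 : 0 ≤ e) (he : e ≤ 1 / 2) (n : ℕ) :
    logb 2 (∑ k ∈ range (⌊n * e⌋₊ + 1), (n.choose k : ℝ)) ≤ n * binEnt2 e := by
  calc logb 2 (∑ k ∈ range (⌊n * e⌋₊ + 1), (n.choose k : ℝ))
      ≤ logb 2 (exp (n * binEntropy e)) :=
        logb_le_logb_of_le one_lt_two (zero_lt_one.trans_le (one_le_sum_range_choose n _))
          (sum_range_choose_le_exp_binEntropy he0 he n)
    _ = n * binEnt2 e := by rw [logb, log_exp, binEnt2_eq_binEntropy_div_log_two, mul_div_assoc]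

lemma card_hammingBall_le {ι : Type*} [Fintype ι] [DecidableEq ι] (y : ι → Bool) (m : ℕ) :
    #{x : ι → Bool | hammingDist x y ≤ m} ≤ ∑ k ∈ range (m + 1), (Fintype.card ι).choose k := by
  simp_rw [← card_univ, ← card_powersetCard]
  refine (card_le_card_of_injOn (t := (range (m + 1)).biUnion (powersetCard · univ))
    (fun x => ({i | x i ≠ y i} : Finset ι)) ?_ ?_).trans card_biUnion_le
  · intro x hx
    simp only [coe_filter, mem_univ, true_and, Set.mem_ofPred_eq] at hx
    exact mem_biUnion.2 ⟨_, mem_range.2 (Nat.lt_succ_of_le hx), mem_powersetCard_univ.2 rfl⟩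
  · intro x _ x' _ h
    funext i
    have hi := Finset.ext_iff.mp h i
    simp only [mem_filter, mem_univ, true_and] at hi
    revert hi
    cases x i <;> cases x' i <;> cases y i <;> simp

lemma lt_errFrac_of_floor_lt {n : ℕ} {x y : Str n} {e : ℝ} (he : 0 ≤ e)
    (h : ⌊n * e⌋₊ < hammingDist x y) : e < errFrac x y := by
  have hn : 0 < n := by
    simpa using (Nat.zero_le _).trans_lt (h.trans_le hammingDist_le_card_fintype)
  rw [errFrac, lt_div_iff₀ (by exact_mod_cast hn), mul_comm]
  exact (Nat.floor_lt (by positivity)).1 h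

lemma sq_sum_sqrt_le_card_mul_sum {α : Type*} [Fintype α] {f : α → ℝ} (hf : ∀ a, 0 ≤ f a)
    (s : Finset α) (hs : ∀ a ∉ s, f a = 0) :
    (∑ a, √(f a)) ^ 2 ≤ #s * ∑ a, f a := by
  rw [← sum_subset (subset_univ s) fun a _ ha => by rw [hs a ha, sqrt_zero],
    ← sum_subset (subset_univ s) fun a _ ha => hs a ha]
  calc (∑ a ∈ s, √(f a)) ^ 2 ≤ #s * ∑ a ∈ s, √(f a) ^ 2 := sq_sum_le_card_mul_sum_sq
    _ = #s * ∑ a ∈ s, f a := by simp_rw [sq_sqrt (hf _)]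

lemma Hmax_le_logb_sum_choose {n m : ℕ} {q : Str n → Str n → ℝ} (hq : IsSubState q)
    (hsupp : ∀ x y, m < hammingDist x y → q x y = 0) :
    Hmax q ≤ logb 2 (∑ k ∈ range (m + 1), (n.choose k : ℝ)) := by
  set N := ∑ k ∈ range (m + 1), (n.choose k : ℝ)
  have hN : 1 ≤ N := one_le_sum_range_choose n m
  have hcol : ∀ y, (∑ x, √(q x y)) ^ 2 ≤ N * ∑ x, q x y := fun y => by
    refine (sq_sum_sqrt_le_card_mul_sum (hq.1 · y) {x | hammingDist x y ≤ m}
      fun x hx => hsupp x y (by simpa using hx)).trans ?_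
    gcongr
    · exact sum_nonneg fun x _ => hq.1 x y
    · have hball := card_hammingBall_le y m
      rw [Fintype.card_fin] at hball
      simp only [N]
      exact_mod_cast hball
  have htot : ∑ y, (∑ x, √(q x y)) ^ 2 ≤ N :=
    calc ∑ y, (∑ x, √(q x y)) ^ 2 ≤ ∑ y, N * ∑ x, q x y := sum_le_sum fun y _ => hcol y
      _ = N * mass q := by rw [← mul_sum, mass, sum_comm]
      _ ≤ N := mul_le_of_le_one_right (by linarith) hq.2
  rcases (sum_nonneg fun y _ => sq_nonneg _ : 0 ≤ ∑ y, (∑ x, √(q x y)) ^ 2).eq_or_lt with h0 | hpos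
  · rw [Hmax, ← h0, logb_zero]
    exact logb_nonneg one_lt_two hN
  · exact logb_le_logb_of_le one_lt_two hpos htot

lemma sqrt_mul_div_self {t : ℝ} (ht : 0 ≤ t) (c : ℝ) : √(t * (t / c)) = t / √c := by
  rw [← mul_div_assoc, sqrt_div (mul_self_nonneg t), sqrt_mul_self ht]

section DiscardEvent

variable {n : ℕ}

noncomputable def eventProb (Ω : Set (Str n × Str n)) (p : Str n → Str n → ℝ) : ℝ :=
  ∑ x, ∑ y, Ω.indicator (fun xy => p xy.1 xy.2) (x, y)

/-- Rescaling by `1 - Pr(Ω)` rather than by the remaining mass keeps the defect `1 - mass`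
proportional to that of `p`, which makes the generalized fidelity exactly `√(1 - Pr(Ω))`.
When `Pr(Ω) = 1` the division by zero makes this `0`. -/
noncomputable def discardEvent (Ω : Set (Str n × Str n)) (p : Str n → Str n → ℝ) :
    Str n → Str n → ℝ :=
  fun x y => Ωᶜ.indicator (fun xy => p xy.1 xy.2) (x, y) / (1 - eventProb Ω p)

variable {Ω : Set (Str n × Str n)} {p : Str n → Str n → ℝ}

lemma eventProb_nonneg (hp : ∀ x y, 0 ≤ p x y) : 0 ≤ eventProb Ω p :=
  sum_nonneg fun _ _ => sum_nonneg fun _ _ => Set.indicator_nonneg (fun xy _ => hp xy.1 xy.2) _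

lemma eventProb_add_eventProb_compl (Ω : Set (Str n × Str n)) (p : Str n → Str n → ℝ) :
    eventProb Ω p + eventProb Ωᶜ p = mass p := by
  simp only [eventProb, mass, ← sum_add_distrib, Set.indicator_self_add_compl_apply]

lemma discardEvent_eq_zero_of_mem {x y : Str n} (h : (x, y) ∈ Ω) : discardEvent Ω p x y = 0 := by
  simp [discardEvent, h]

lemma mass_discardEvent : mass (discardEvent Ω p) = eventProb Ωᶜ p / (1 - eventProb Ω p) := by
  simp only [mass, discardEvent, eventProb, sum_div]

lemma isSubState_discardEvent (hp : IsSubState p) : IsSubState (discardEvent Ω p) := by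
  have hδ := eventProb_add_eventProb_compl Ω p
  have hΩc := eventProb_nonneg (Ω := Ωᶜ) hp.1
  refine ⟨fun x y => div_nonneg (Set.indicator_nonneg (fun xy _ => hp.1 xy.1 xy.2) _)
    (by linarith [hp.2]), ?_⟩
  rw [mass_discardEvent]
  exact div_le_one_of_le₀ (by linarith [hp.2]) (by linarith [hp.2])

lemma genFid_discardEvent (hp : IsSubState p) :
    genFid p (discardEvent Ω p) = √(1 - eventProb Ω p) := by
  have hδ := eventProb_add_eventProb_compl Ω p
  have hΩc := eventProb_nonneg (Ω := Ωᶜ) hp.1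
  have hcross : ∑ x, ∑ y, √(p x y * discardEvent Ω p x y) =
      eventProb Ωᶜ p / √(1 - eventProb Ω p) := by
    simp only [eventProb, sum_div]
    refine sum_congr rfl fun x _ => sum_congr rfl fun y _ => ?_
    by_cases h : (x, y) ∈ Ωᶜ
    · simp only [discardEvent, Set.indicator_of_mem h, sqrt_mul_div_self (hp.1 x y)]
      rfl
    · simp [discardEvent, Set.indicator_of_notMem h]
  have hdefect : √((1 - mass p) * (1 - mass (discardEvent Ω p))) =
      (1 - mass p) / √(1 - eventProb Ω p) := by
    rcases (show 0 ≤ 1 - eventProb Ω p by linarith [hp.2]).eq_or_lt with hc | hc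
    · rw [show 1 - mass p = 0 by linarith [hp.2], zero_mul, zero_div, sqrt_zero]
    · rw [← sqrt_mul_div_self (by linarith [hp.2]), mass_discardEvent]
      congr 2
      field_simp
      linarith
  rw [genFid, hcross, hdefect, ← add_div,
    show eventProb Ωᶜ p + (1 - mass p) = 1 - eventProb Ω p by linarith, div_sqrt]

lemma purDist_discardEvent (hp : IsSubState p) :
    purDist p (discardEvent Ω p) = √(eventProb Ω p) := by
  have hδ := eventProb_add_eventProb_compl Ω p
  have hΩc := eventProb_nonneg (Ω := Ωᶜ) hp.1
  rw [purDist, genFid_discardEvent hp, sq_sqrt (by linarith [hp.2]), sub_sub_cancel]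

end DiscardEvent

/-- `sInf` of a set of reals that is unbounded below is `0`. -/
lemma smoothHmax_le {n : ℕ} {ε c : ℝ} {p q : Str n → Str n → ℝ} (hq : IsSubState q)
    (hpq : purDist p q ≤ ε) (hHmax : Hmax q ≤ c) (hc : 0 ≤ c) : smoothHmax ε p ≤ c := by
  by_cases hbdd : BddBelow {h : ℝ | ∃ q, IsSubState q ∧ purDist p q ≤ ε ∧ h = Hmax q}
  · exact (csInf_le hbdd ⟨q, hq, hpq, rfl⟩).trans hHmax
  · rwa [smoothHmax, Real.sInf_of_not_bddBelow hbdd]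

theorem smooth_Hmax_le_of_low_error_general
    (n : ℕ) (p : Str n → Str n → ℝ) (hp : IsSubState p)
    (e_max κ : ℝ) (he0 : 0 ≤ e_max) (he2 : e_max < 1 / 2)
    (Ω : Set (Str n × Str n))
    (hΩ : {xy : Str n × Str n | e_max < errFrac xy.1 xy.2} ⊆ Ω)
    (hPr : (∑ x, ∑ y, Ω.indicator (fun xy => p xy.1 xy.2) (x, y)) ≤ κ) :
    smoothHmax (Real.sqrt κ) p ≤ (n : ℝ) * binEnt2 e_max := by
  have hsupp : ∀ x y, ⌊n * e_max⌋₊ < hammingDist x y → discardEvent Ω p x y = 0 :=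
    fun x y h => discardEvent_eq_zero_of_mem (hΩ (lt_errFrac_of_floor_lt he0 h))
  refine smoothHmax_le (isSubState_discardEvent (Ω := Ω) hp) ?_ ?_
    (mul_nonneg n.cast_nonneg (binEnt2_nonneg he0 (by linarith)))
  · rw [purDist_discardEvent hp]
    exact sqrt_le_sqrt hPr
  · exact (Hmax_le_logb_sum_choose (isSubState_discardEvent hp) hsupp).trans
      (logb_sum_range_choose_le he0 he2.le n)

/-- **Smooth max-entropy bound from a low error rate.** If the probability (under the
sub-normalized cq state `p`) of an event `Ω` containing `{e_XY > e_max}` is at most `κ`,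
with `0 ≤ e_max < 1/2`, then `H_max^{√κ}(X|Y)_p ≤ n·h(e_max)`. -/
theorem smooth_Hmax_le_of_low_error
    (n : ℕ) (p : Str n → Str n → ℝ) (hp : IsSubState p)
    (e_max κ : ℝ) (he0 : 0 ≤ e_max) (he2 : e_max < 1 / 2) (hκ : 0 ≤ κ)
    (Ω : Set (Str n × Str n))
    (hΩ : {xy : Str n × Str n | e_max < errFrac xy.1 xy.2} ⊆ Ω)
    (hPr : (∑ x, ∑ y, Ω.indicator (fun xy => p xy.1 xy.2) (x, y)) ≤ κ) :
    smoothHmax (Real.sqrt κ) p ≤ (n : ℝ) * binEnt2 e_max :=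
  smooth_Hmax_le_of_low_error_general n p hp e_max κ he0 he2 Ω hΩ hPr
end

section
/- Let μ₁ > μ₂ + μ₃ and μ₂ > μ₃ ≥ 0 be intensities with probabilities p_{μ_k} > 0 summing to 1, Poissonian photon-number distribution p_{m|μ_k} = e^{−μ_k} μ_k^m / m!, and τ_m = Σ_k p_{μ_k} p_{m|μ_k}. Suppose nonnegative reals {n_m}_{m≥0} (photon-number counts) and observed counts {n_k}_{k=1,2,3} satisfy, for each k, Σ_{m≥0} (μ_k^m/m!)·(n_m/τ_m) ∈ [n_k^−, n_k^+], where n_k^± := (e^{μ_k}/p_{μ_k})(n_k ± t) for some t ≥ 0. Then n_0 ≥ τ_0·(μ₂ n₃^− − μ₃ n₂^+)/(μ₂ − μ₃). -/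
open BigOperators

/-- **Decoy-state zero-photon lower bound.** With intensities `μ 0 > μ 1 + μ 2`,
`μ 1 > μ 2 ≥ 0` chosen with probabilities `p k > 0` summing to 1, Poissonian photon-number
distribution, `τ m = Σ_k p k · e^{−μ k} μ k^m / m!`, nonnegative photon-number counts
`nm m`, and observed counts `nk k` satisfying the decoy constraints
`n_k^− ≤ Σ_m (μ_k^m/m!)(nm m / τ m) ≤ n_k^+` with `n_k^± = (e^{μ_k}/p_k)(nk k ± t)`,
one obtains `nm 0 ≥ τ 0 · (μ₂ n₃^− − μ₃ n₂^+)/(μ₂ − μ₃)`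
(intensities indexed so that `μ₁ = μ 0`, `μ₂ = μ 1`, `μ₃ = μ 2`). -/
theorem decoy_zero_photon_lower_bound
    (μ : Fin 3 → ℝ) (hμ1 : μ 1 + μ 2 < μ 0) (hμ23 : μ 2 < μ 1) (hμ3 : 0 ≤ μ 2)
    (p : Fin 3 → ℝ) (hp : ∀ k, 0 < p k) (hpsum : ∑ k, p k = 1)
    (τ : ℕ → ℝ)
    (hτ : ∀ m : ℕ, τ m = ∑ k, p k * (Real.exp (-μ k) * μ k ^ m / (m.factorial : ℝ)))
    (nm : ℕ → ℝ) (hnm : ∀ m, 0 ≤ nm m)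
    (nk : Fin 3 → ℝ) (t : ℝ) (ht : 0 ≤ t)
    (nminus nplus : Fin 3 → ℝ)
    (hnminus : ∀ k, nminus k = Real.exp (μ k) / p k * (nk k - t))
    (hnplus : ∀ k, nplus k = Real.exp (μ k) / p k * (nk k + t))
    (hsum : ∀ k : Fin 3, Summable (fun m : ℕ => μ k ^ m / (m.factorial : ℝ) * (nm m / τ m)))
    (hlo : ∀ k : Fin 3, nminus k ≤ ∑' m : ℕ, μ k ^ m / (m.factorial : ℝ) * (nm m / τ m))
    (hhi : ∀ k : Fin 3, (∑' m : ℕ, μ k ^ m / (m.factorial : ℝ) * (nm m / τ m)) ≤ nplus k) :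
    τ 0 * (μ 1 * nminus 2 - μ 2 * nplus 1) / (μ 1 - μ 2) ≤ nm 0 := by
  have hμ2pos : 0 < μ 1 := lt_of_le_of_lt hμ3 hμ23
  have hμ0pos : 0 < μ 0 := by linarith
  have hτpos : ∀ m, 0 < τ m := by
    intro m
    rw [hτ m, Fin.sum_univ_three]
    have h0 : (0:ℝ) < p 0 * (Real.exp (-μ 0) * μ 0 ^ m / (m.factorial : ℝ)) := by
      have := hp 0; positivity
    have h1 : (0:ℝ) ≤ p 1 * (Real.exp (-μ 1) * μ 1 ^ m / (m.factorial : ℝ)) := by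
      have := (hp 1).le; positivity
    have h2 : (0:ℝ) ≤ p 2 * (Real.exp (-μ 2) * μ 2 ^ m / (m.factorial : ℝ)) := by
      have := (hp 2).le; positivity
    linarith
  set f : ℕ → ℝ := fun m =>
    μ 1 * (μ 2 ^ m / (m.factorial : ℝ) * (nm m / τ m))
      - μ 2 * (μ 1 ^ m / (m.factorial : ℝ) * (nm m / τ m)) with hf
  have hsf : Summable f := ((hsum 2).mul_left (μ 1)).sub ((hsum 1).mul_left (μ 2))
  have htsumf : ∑' m, f m
      = μ 1 * (∑' m : ℕ, μ 2 ^ m / (m.factorial : ℝ) * (nm m / τ m))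
        - μ 2 * (∑' m : ℕ, μ 1 ^ m / (m.factorial : ℝ) * (nm m / τ m)) := by
    rw [hf, Summable.tsum_sub ((hsum 2).mul_left (μ 1)) ((hsum 1).mul_left (μ 2)),
      tsum_mul_left, tsum_mul_left]
  set g : ℕ → ℝ := fun m => if m ≤ 1 then f m else 0 with hg
  have hgf : ∀ m, f m ≤ g m := by
    intro m
    match m with
    | 0 => simp [hg]
    | 1 => simp [hg]
    | (n+2) =>
      have hgz : g (n+2) = 0 := by simp [hg]
      rw [hgz]
      have hc : μ 1 * μ 2 ^ (n+2) - μ 2 * μ 1 ^ (n+2) ≤ 0 := by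
        have hpow : μ 2 ^ (n+1) ≤ μ 1 ^ (n+1) := pow_le_pow_left₀ hμ3 hμ23.le _
        have : μ 1 * μ 2 ^ (n+2) - μ 2 * μ 1 ^ (n+2)
            = μ 1 * μ 2 * (μ 2 ^ (n+1) - μ 1 ^ (n+1)) := by ring
        rw [this]
        exact mul_nonpos_of_nonneg_of_nonpos (by positivity) (by linarith)
      have hq : 0 ≤ nm (n+2) / τ (n+2) / ((n+2).factorial : ℝ) :=
        div_nonneg (div_nonneg (hnm _) (hτpos _).le) (by positivity)
      have heq : f (n+2)
          = (μ 1 * μ 2 ^ (n+2) - μ 2 * μ 1 ^ (n+2))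
              * (nm (n+2) / τ (n+2) / ((n+2).factorial : ℝ)) := by
        simp only [hf]; ring
      rw [heq]
      exact mul_nonpos_of_nonpos_of_nonneg hc hq
  have hsg : Summable g := by
    apply summable_of_ne_finset_zero (s := {0, 1})
    intro m hm
    simp only [Finset.mem_insert, Finset.mem_singleton] at hm
    have : ¬ m ≤ 1 := by omega
    simp [hg, this]
  have htsumg : ∑' m, g m = f 0 + f 1 := by
    rw [tsum_eq_sum (s := {0, 1}) (by
      intro m hm
      simp only [Finset.mem_insert, Finset.mem_singleton] at hm
      have : ¬ m ≤ 1 := by omega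
      simp [hg, this])]
    simp [hg]
  have hf0 : f 0 = (μ 1 - μ 2) * (nm 0 / τ 0) := by simp [hf]; ring
  have hf1 : f 1 = 0 := by simp [hf]; ring
  have hmain : ∑' m, f m ≤ (μ 1 - μ 2) * (nm 0 / τ 0) := by
    calc ∑' m, f m ≤ ∑' m, g m := Summable.tsum_le_tsum hgf hsf hsg
      _ = (μ 1 - μ 2) * (nm 0 / τ 0) := by rw [htsumg, hf0, hf1]; ring
  have hlow : μ 1 * nminus 2 - μ 2 * nplus 1 ≤ ∑' m, f m := by
    rw [htsumf]
    have h1 := mul_le_mul_of_nonneg_left (hlo 2) hμ2pos.le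
    have h2 := mul_le_mul_of_nonneg_left (hhi 1) hμ3
    linarith
  rw [div_le_iff₀ (by linarith : (0:ℝ) < μ 1 - μ 2)]
  have key : τ 0 * ((μ 1 - μ 2) * (nm 0 / τ 0)) = nm 0 * (μ 1 - μ 2) := by
    rw [show τ 0 * ((μ 1 - μ 2) * (nm 0 / τ 0)) = nm 0 / τ 0 * τ 0 * (μ 1 - μ 2) from by
      ring, div_mul_cancel₀ _ (hτpos 0).ne']
  nlinarith [mul_le_mul_of_nonneg_left (le_trans hlow hmain) (hτpos 0).le]
end
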